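/- arXiv:2412.18875 — 3 statements merged into one kernel-verified Lean document; each statement's English description precedes it below -/
import Mathlib

section
/- The pseudometric space (Π_{≤k}, d_ω) is compact; equivalently, every sequence of classifications consisting of at most k intervals has a subsequence that converges in the pseudometric d_ω to some classification in Π_{≤k}. -/
/-! An interval is the intersection of its upper and lower closures, and the upper (lower) subsets
of `ℝ` form a chain. By Erdős–Szekeres, along a subsequence all these closures become monotone, so
the parts of `π m` converge pointwise (the membership of each point eventually stabilises) to
pairwise disjoint intervals `D i` covering `[0,1]`, and by dominated convergence the measures of
the symmetric differences tend to `0`. Some `D i` may be null: absorbing each of them into a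
neighbour of positive measure yields a classification `ρ` whose parts agree with the `D i` up to
null sets, and `d_ω (π m, ρ)` is bounded by the sum of those symmetric-difference measures. -/

open MeasureTheory Set
open scoped ENNReal NNReal symmDiff

noncomputable section

/-- A classification: a finite partition of `[0,1]` into intervals of positive measure. -/
structure Classification (ω : Measure ℝ) where
  parts : Finset (Set ℝ)
  isInterval : ∀ C ∈ parts, C.OrdConnected
  posMeas : ∀ C ∈ parts, 0 < ω C
  pairwiseDisj : (parts : Set (Set ℝ)).PairwiseDisjoint id
  cover : ⋃₀ (parts : Set (Set ℝ)) = Set.Icc (0 : ℝ) 1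

/-- The (finite) algebra of subsets generated by a classification. -/
def sigmaAlg {ω : Measure ℝ} (π : Classification ω) : Set (Set ℝ) :=
  {B | ∃ S : Finset (Set ℝ), S ⊆ π.parts ∧ B = ⋃₀ (S : Set (Set ℝ))}

/-- `δ_ω(π,π') = sup_{C ∈ σ(π)} inf_{C' ∈ σ(π')} ω (C △ C')`. -/
def deltaOmega (ω : Measure ℝ) (π π' : Classification ω) : ℝ≥0∞ :=
  ⨆ C ∈ sigmaAlg π, ⨅ C' ∈ sigmaAlg π', ω (C ∆ C')

/-- The pseudometric `d_ω`. -/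
def dOmega (ω : Measure ℝ) (π π' : Classification ω) : ℝ≥0∞ :=
  max (deltaOmega ω π π') (deltaOmega ω π' π)

open Filter Function Topology

section SetSequences

variable {α : Type*}

theorem Monotone.eventually_mem_iff_mem_iUnion {A : ℕ → Set α} (hA : Monotone A) (x : α) :
    ∀ᶠ m in atTop, x ∈ A m ↔ x ∈ ⋃ n, A n := by
  by_cases hx : x ∈ ⋃ n, A n
  · obtain ⟨n, hn⟩ := mem_iUnion.1 hx
    filter_upwards [eventually_ge_atTop n] with m hm
    exact iff_of_true (hA hm hn) hx
  · exact Eventually.of_forall fun m => iff_of_false (fun h => hx (mem_iUnion_of_mem m h)) hx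

theorem Antitone.eventually_mem_iff_mem_iInter {A : ℕ → Set α} (hA : Antitone A) (x : α) :
    ∀ᶠ m in atTop, x ∈ A m ↔ x ∈ ⋂ n, A n := by
  by_cases hx : x ∈ ⋂ n, A n
  · exact Eventually.of_forall fun m => iff_of_true (mem_iInter.1 hx m) hx
  · obtain ⟨n, hn⟩ := not_forall.1 (mt mem_iInter.2 hx)
    filter_upwards [eventually_ge_atTop n] with m hm
    exact iff_of_false (fun h => hn (hA hm h)) hx

/-- Erdős–Szekeres gives a monotone or antitone subsequence, which converges pointwise to its
union or intersection. -/
theorem exists_subseq_eventually_mem_iff_of_total {p : Set α → Prop}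
    (hUnion : ∀ s : ℕ → Set α, (∀ n, p (s n)) → p (⋃ n, s n))
    (hInter : ∀ s : ℕ → Set α, (∀ n, p (s n)) → p (⋂ n, s n))
    {A : ℕ → Set α} (hA : ∀ n, p (A n)) (htotal : ∀ m n, A m ⊆ A n ∨ A n ⊆ A m) :
    ∃ φ : ℕ → ℕ, StrictMono φ ∧ ∃ B, p B ∧ ∀ x, ∀ᶠ m in atTop, x ∈ A (φ m) ↔ x ∈ B := by
  obtain ⟨g, hg | hg⟩ := exists_increasing_or_nonincreasing_subseq (· ⊆ ·) A
  · have hmono : Monotone (A ∘ g) := monotone_nat_of_le_succ fun n => hg n (n + 1) n.lt_succ_self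
    exact ⟨g, g.strictMono, _, hUnion _ fun n => hA (g n), hmono.eventually_mem_iff_mem_iUnion⟩
  · have hanti : Antitone (A ∘ g) := antitone_nat_of_succ_le fun n =>
      (htotal _ _).resolve_left (hg n (n + 1) n.lt_succ_self)
    exact ⟨g, g.strictMono, _, hInter _ fun n => hA (g n), hanti.eventually_mem_iff_mem_iInter⟩

/-- An order-connected set is the intersection of its upper and lower closures, and in a linear
order the upper (lower) sets form a chain. -/
theorem exists_subseq_eventually_mem_iff_of_ordConnected [LinearOrder α] {A : ℕ → Set α}
    (hA : ∀ n, (A n).OrdConnected) :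
    ∃ φ : ℕ → ℕ, StrictMono φ ∧
      ∃ B : Set α, B.OrdConnected ∧ ∀ x, ∀ᶠ m in atTop, x ∈ A (φ m) ↔ x ∈ B := by
  obtain ⟨φ, hφ, U, hU, hUlim⟩ := exists_subseq_eventually_mem_iff_of_total
    (fun _ => isUpperSet_iUnion) (fun _ => isUpperSet_iInter)
    (A := fun n => (upperClosure (A n) : Set α)) (fun n => (upperClosure _).upper)
    fun m n => (upperClosure _).upper.total (upperClosure _).upper
  obtain ⟨ψ, hψ, L, hL, hLlim⟩ := exists_subseq_eventually_mem_iff_of_total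
    (fun _ => isLowerSet_iUnion) (fun _ => isLowerSet_iInter)
    (A := fun n => (lowerClosure (A (φ n)) : Set α)) (fun n => (lowerClosure _).lower)
    fun m n => (lowerClosure _).lower.total (lowerClosure _).lower
  refine ⟨φ ∘ ψ, hφ.comp hψ, U ∩ L, hU.ordConnected.inter hL.ordConnected, fun x => ?_⟩
  filter_upwards [hψ.tendsto_atTop.eventually (hUlim x), hLlim x] with m hUm hLm
  rw [comp_apply, ← (hA _).upperClosure_inter_lowerClosure, mem_inter_iff,
    mem_inter_iff, hUm, hLm]

theorem exists_strictMono_forall_mem_of_exists_subseq {ι : Type*} (s : Finset ι)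
    {P : ι → (ℕ → ℕ) → Prop} (hP : ∀ i φ (ψ : ℕ → ℕ), P i φ → StrictMono ψ → P i (φ ∘ ψ))
    (hex : ∀ i φ, StrictMono φ → ∃ ψ : ℕ → ℕ, StrictMono ψ ∧ P i (φ ∘ ψ)) :
    ∃ φ, StrictMono φ ∧ ∀ i ∈ s, P i φ := by
  classical
  induction s using Finset.induction_on with
  | empty => exact ⟨id, strictMono_id, by simp⟩
  | insert a s _ ih =>
    obtain ⟨φ, hφ, hs⟩ := ih
    obtain ⟨ψ, hψ, ha⟩ := hex a φ hφ
    exact ⟨φ ∘ ψ, hφ.comp hψ,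
      (Finset.forall_mem_insert _ _ _).2 ⟨ha, fun i hi => hP i φ ψ (hs i hi) hψ⟩⟩

theorem exists_subseq_eventually_forall_mem_iff {ι : Type*} [Finite ι] [LinearOrder α]
    {A : ℕ → ι → Set α} (hA : ∀ n i, (A n i).OrdConnected) :
    ∃ φ : ℕ → ℕ, StrictMono φ ∧ ∃ B : ι → Set α, (∀ i, (B i).OrdConnected) ∧
      ∀ x, ∀ᶠ m in atTop, ∀ i, x ∈ A (φ m) i ↔ x ∈ B i := by
  have := Fintype.ofFinite ι
  obtain ⟨φ, hφ, hB⟩ := exists_strictMono_forall_mem_of_exists_subseq Finset.univ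
    (P := fun i φ => ∃ B : Set α, B.OrdConnected ∧ ∀ x, ∀ᶠ m in atTop, x ∈ A (φ m) i ↔ x ∈ B)
    (fun _ _ _ ⟨B, hB, hlim⟩ hψ => ⟨B, hB, fun x => hψ.tendsto_atTop.eventually (hlim x)⟩)
    (fun i _ _ => exists_subseq_eventually_mem_iff_of_ordConnected fun n => hA _ i)
  choose B hBconn hlim using fun i => hB i (Finset.mem_univ i)
  exact ⟨φ, hφ, B, hBconn, fun x => eventually_all.2 fun i => hlim i x⟩

theorem Set.OrdConnected.precedes_or_precedes [LinearOrder α] {s t : Set α}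
    (hs : s.OrdConnected) (ht : t.OrdConnected) (hst : Disjoint s t) :
    (∀ x ∈ s, ∀ y ∈ t, x < y) ∨ ∀ x ∈ t, ∀ y ∈ s, x < y := by
  by_contra! h
  obtain ⟨⟨x, hx, y, hy, hyx⟩, a, ha, b, hb, hba⟩ := h
  rcases le_total x a with hxa | hax
  · exact disjoint_left.1 hst hx (ht.out hy ha ⟨hyx, hxa⟩)
  · exact disjoint_left.1 hst (hs.out hb hx ⟨hba, hax⟩) ha

theorem tendsto_measure_symmDiff_of_eventually_mem_iff [MeasurableSpace α] {μ : Measure α}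
    [IsFiniteMeasure μ] {ι : Type*} {l : Filter ι} [l.IsCountablyGenerated] {A : ι → Set α}
    {B : Set α} (hA : ∀ i, MeasurableSet (A i)) (hB : MeasurableSet B)
    (hlim : ∀ x, ∀ᶠ i in l, x ∈ A i ↔ x ∈ B) :
    Tendsto (fun i => μ (A i ∆ B)) l (𝓝 0) := by
  simpa using tendsto_measure_of_ae_tendsto_indicator_of_isFiniteMeasure l MeasurableSet.empty
    (fun i => (hA i).symmDiff hB) (ae_of_all μ fun x => (hlim x).mono fun i hi => by
      simp [mem_symmDiff, hi])

end SetSequences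

namespace Classification

variable {ω : Measure ℝ} {ι : Type*}

theorem measure_Icc_pos (π : Classification ω) : 0 < ω (Icc 0 1) := by
  have h0 : (0 : ℝ) ∈ ⋃₀ (π.parts : Set (Set ℝ)) := π.cover ▸ ⟨le_rfl, zero_le_one⟩
  obtain ⟨C, hC, -⟩ := h0
  exact (π.posMeas C hC).trans_le (measure_mono (π.cover ▸ subset_sUnion_of_mem hC))

def IsEnumeration (π : Classification ω) (c : ι → Set ℝ) : Prop :=
  (∀ i, c i ∈ π.parts ∨ c i = ∅) ∧ ∀ C ∈ π.parts, ∃ i, c i = C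

namespace IsEnumeration

variable {π : Classification ω} {c : ι → Set ℝ}

theorem ordConnected (hc : π.IsEnumeration c) (i : ι) : (c i).OrdConnected :=
  (hc.1 i).elim (π.isInterval _) fun h => h ▸ ordConnected_empty

theorem iUnion_eq (hc : π.IsEnumeration c) : ⋃ i, c i = Icc 0 1 := by
  rw [← π.cover]
  ext x
  simp only [mem_iUnion, mem_sUnion, Finset.mem_coe]
  constructor
  · rintro ⟨i, hx⟩
    exact ⟨c i, (hc.1 i).resolve_right (nonempty_of_mem hx).ne_empty, hx⟩
  · rintro ⟨C, hC, hx⟩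
    obtain ⟨i, rfl⟩ := hc.2 C hC
    exact ⟨i, hx⟩

theorem sigmaAlg_eq [Fintype ι] (hc : π.IsEnumeration c) :
    sigmaAlg π = range fun S : Finset ι => ⋃ i ∈ S, c i := by
  classical
  ext B
  constructor
  · rintro ⟨T, hT, rfl⟩
    refine ⟨Finset.univ.filter fun i => c i ∈ T, ?_⟩
    ext x
    simp only [Finset.mem_filter, Finset.mem_univ, true_and, mem_iUnion, exists_prop,
      mem_sUnion, Finset.mem_coe]
    constructor
    · rintro ⟨i, hi, hx⟩
      exact ⟨c i, hi, hx⟩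
    · rintro ⟨C, hC, hx⟩
      obtain ⟨i, rfl⟩ := hc.2 C (hT hC)
      exact ⟨i, hC, hx⟩
  · rintro ⟨S, rfl⟩
    refine ⟨(S.image c).filter (· ∈ π.parts), fun C hC => (Finset.mem_filter.1 hC).2, ?_⟩
    ext x
    simp only [mem_iUnion, exists_prop, mem_sUnion, Finset.coe_filter, Finset.mem_image]
    constructor
    · rintro ⟨i, hi, hx⟩
      exact ⟨c i, ⟨⟨i, hi, rfl⟩, (hc.1 i).resolve_right (nonempty_of_mem hx).ne_empty⟩, hx⟩
    · rintro ⟨_, ⟨⟨i, hi, rfl⟩, -⟩, hx⟩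
      exact ⟨i, hi, hx⟩

theorem card_le [Fintype ι] (hc : π.IsEnumeration c) : π.parts.card ≤ Fintype.card ι := by
  classical
  calc π.parts.card ≤ (Finset.univ.image c).card :=
        Finset.card_le_card fun C hC => Finset.mem_image.2 <| (hc.2 C hC).imp fun i hi =>
          ⟨Finset.mem_univ i, hi⟩
    _ ≤ Fintype.card ι := Finset.card_image_le

end IsEnumeration

theorem exists_isEnumeration_fin (π : Classification ω) {k : ℕ} (hk : π.parts.card ≤ k) :
    ∃ c : Fin k → Set ℝ, π.IsEnumeration c ∧ Pairwise (Disjoint on c) := by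
  set e := π.parts.equivFin
  let c : Fin k → Set ℝ := fun i => if h : (i : ℕ) < π.parts.card then e.symm ⟨i, h⟩ else ∅
  have hc : ∀ (i : Fin k) (h : (i : ℕ) < π.parts.card), c i = e.symm ⟨i, h⟩ := fun i h => dif_pos h
  have hc' : ∀ i : Fin k, ¬(i : ℕ) < π.parts.card → c i = ∅ := fun i h => dif_neg h
  refine ⟨c, ⟨fun i => ?_, fun C hC => ?_⟩, fun i j hij => ?_⟩
  · by_cases h : (i : ℕ) < π.parts.card
    · exact Or.inl (hc i h ▸ (e.symm _).2)
    · exact Or.inr (hc' i h)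
  · refine ⟨⟨e ⟨C, hC⟩, (e ⟨C, hC⟩).2.trans_le hk⟩, ?_⟩
    rw [hc _ (e ⟨C, hC⟩).2, Fin.eta, Equiv.symm_apply_apply]
  · by_cases hi : (i : ℕ) < π.parts.card
    · by_cases hj : (j : ℕ) < π.parts.card
      · rw [onFun, hc i hi, hc j hj]
        refine π.pairwiseDisj (e.symm _).2 (e.symm _).2 fun h => hij (Fin.ext ?_)
        simpa using e.symm.injective (Subtype.ext h)
      · rw [onFun, hc' j hj]
        exact disjoint_empty _
    · rw [onFun, hc' i hi]
      exact empty_disjoint _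

theorem deltaOmega_le_sum [Fintype ι] {π ρ : Classification ω} {c f : ι → Set ℝ}
    (hc : π.IsEnumeration c) (hf : ρ.IsEnumeration f) :
    deltaOmega ω π ρ ≤ ∑ i, ω (c i ∆ f i) := by
  rw [deltaOmega, hc.sigmaAlg_eq]
  refine iSup₂_le ?_
  rintro _ ⟨S, rfl⟩
  refine (iInf₂_le (⋃ i ∈ S, f i) (hf.sigmaAlg_eq ▸ ⟨S, rfl⟩)).trans ?_
  calc ω ((⋃ i ∈ S, c i) ∆ ⋃ i ∈ S, f i) ≤ ω (⋃ i ∈ S, c i ∆ f i) :=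
        measure_mono <| iUnion_symmDiff_iUnion_subset.trans <|
          iUnion_mono fun _ => iUnion_symmDiff_iUnion_subset
    _ ≤ ∑ i ∈ S, ω (c i ∆ f i) := measure_biUnion_finset_le _ _
    _ ≤ ∑ i, ω (c i ∆ f i) := Finset.sum_le_sum_of_subset (Finset.subset_univ _)

theorem dOmega_le_sum [Fintype ι] {π ρ : Classification ω} {c f : ι → Set ℝ}
    (hc : π.IsEnumeration c) (hf : ρ.IsEnumeration f) :
    dOmega ω π ρ ≤ ∑ i, ω (c i ∆ f i) :=
  max_le (deltaOmega_le_sum hc hf) (by simpa only [symmDiff_comm] using deltaOmega_le_sum hf hc)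

/-- The block of `[0,1]` that `D i` grows into when the null members of the family are absorbed
by their neighbours: everything from `D i` up to the next member of positive measure, and, if no
member of positive measure precedes `D i`, also everything below `D i`. -/
def absorbNull (ω : Measure ℝ) (D : ι → Set ℝ) (i : ι) : Set ℝ :=
  {x ∈ Icc 0 1 |
    (∀ j, 0 < ω (D j) → (∀ y ∈ D j, ∀ z ∈ D i, y < z) → x ∈ upperClosure (D i)) ∧
    ∀ j, 0 < ω (D j) → (∀ y ∈ D i, ∀ z ∈ D j, y < z) → x ∉ upperClosure (D j)}

section absorbNull

variable {D : ι → Set ℝ}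

theorem ordConnected_absorbNull (i : ι) : (absorbNull ω D i).OrdConnected := by
  refine ⟨fun x hx y hy z hz => ⟨⟨hx.1.1.trans hz.1, hz.2.trans hy.1.2⟩, fun j hj hji => ?_,
    fun j hj hij hzj => ?_⟩⟩
  · exact (upperClosure _).upper hz.1 (hx.2.1 j hj hji)
  · exact hy.2.2 j hj hij ((upperClosure _).upper hz.2 hzj)

theorem subset_absorbNull (hcover : ⋃ i, D i = Icc 0 1) (i : ι) : D i ⊆ absorbNull ω D i :=
  fun x hx => ⟨hcover ▸ mem_iUnion_of_mem i hx, fun _ _ _ => subset_upperClosure hx,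
    fun _ _ hij ⟨_, hy, hyx⟩ => (hij x hx _ hy).not_ge hyx⟩

theorem disjoint_absorbNull (hconn : ∀ i, (D i).OrdConnected) (hdisj : Pairwise (Disjoint on D))
    {i j : ι} (hi : 0 < ω (D i)) (hj : 0 < ω (D j)) (hij : i ≠ j) :
    Disjoint (absorbNull ω D i) (absorbNull ω D j) := by
  rcases (hconn i).precedes_or_precedes (hconn j) (hdisj hij) with h | h
  · exact disjoint_left.2 fun x hxi hxj => hxi.2.2 j hj h (hxj.2.1 i hi h)
  · exact disjoint_right.2 fun x hxj hxi => hxj.2.2 i hi h (hxi.2.1 j hj h)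

/-- Among the members of positive measure, `x` goes to the last one starting at or below `x`, or to
the first one if there is none. -/
theorem exists_pos_mem_absorbNull [Fintype ι] (hpos : ∃ i, 0 < ω (D i)) {x : ℝ}
    (hx : x ∈ Icc 0 1) : ∃ i, 0 < ω (D i) ∧ x ∈ absorbNull ω D i := by
  classical
  choose! p hp using fun j (hj : 0 < ω (D j)) => nonempty_of_measure_ne_zero hj.ne'
  by_cases hT : ∃ j, 0 < ω (D j) ∧ x ∈ upperClosure (D j)
  · obtain ⟨i, hi, hmax⟩ := Finset.exists_max_image
      (Finset.univ.filter fun j => 0 < ω (D j) ∧ x ∈ upperClosure (D j)) p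
      (hT.imp fun j hj => Finset.mem_filter.2 ⟨Finset.mem_univ j, hj⟩)
    simp only [Finset.mem_filter, Finset.mem_univ, true_and] at hi hmax
    exact ⟨i, hi.1, hx, fun _ _ _ => hi.2,
      fun j hj hij hxj => (hij _ (hp i hi.1) _ (hp j hj)).not_ge (hmax j ⟨hj, hxj⟩)⟩
  · push Not at hT
    obtain ⟨i, hi, hmin⟩ := Finset.exists_min_image
      (Finset.univ.filter fun j => 0 < ω (D j)) p
      (hpos.imp fun j hj => Finset.mem_filter.2 ⟨Finset.mem_univ j, hj⟩)
    simp only [Finset.mem_filter, Finset.mem_univ, true_and] at hi hmin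
    exact ⟨i, hi, hx, fun j hj hji => absurd (hmin j hj) (hji _ (hp j hj) _ (hp i hi)).not_ge,
      fun j hj _ => hT j hj⟩

theorem absorbNull_ae_eq [Countable ι] (hconn : ∀ i, (D i).OrdConnected)
    (hdisj : Pairwise (Disjoint on D)) (hcover : ⋃ i, D i = Icc 0 1) {i : ι} (hi : 0 < ω (D i)) :
    absorbNull ω D i =ᵐ[ω] D i := by
  have hnull : ω (⋃ j, ⋃ (_ : ω (D j) = 0), D j) = 0 :=
    measure_iUnion_null fun j => measure_iUnion_null fun hj => hj
  refine ae_eq_set.2 ⟨measure_mono_null (fun x ⟨hxM, hxD⟩ => ?_) hnull, by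
    rw [sdiff_eq_empty.2 (subset_absorbNull hcover i), measure_empty]⟩
  obtain ⟨j, hxj⟩ := mem_iUnion.1 (hcover.symm ▸ hxM.1 : x ∈ ⋃ j, D j)
  have hji : j ≠ i := by rintro rfl; exact hxD hxj
  by_cases hj : ω (D j) = 0
  · exact mem_iUnion₂.2 ⟨j, hj, hxj⟩
  · exact absurd (subset_absorbNull hcover j hxj) (disjoint_left.1
      (disjoint_absorbNull hconn hdisj hi (pos_iff_ne_zero.2 hj) hji.symm) hxM)

theorem exists_isEnumeration_ae_eq [Fintype ι] (hconn : ∀ i, (D i).OrdConnected)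
    (hdisj : Pairwise (Disjoint on D)) (hcover : ⋃ i, D i = Icc 0 1) (hpos : 0 < ω (Icc 0 1)) :
    ∃ (ρ : Classification ω) (f : ι → Set ℝ), ρ.IsEnumeration f ∧ ∀ i, f i =ᵐ[ω] D i := by
  classical
  have hex : ∃ i, 0 < ω (D i) := by
    by_contra! h
    rw [← hcover, measure_iUnion_null fun i => nonpos_iff_eq_zero.1 (h i)] at hpos
    exact hpos.false
  set P := Finset.univ.filter fun i => 0 < ω (D i)
  have hP : ∀ {i}, i ∈ P ↔ 0 < ω (D i) := by simp [P]
  let ρ : Classification ω :=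
    { parts := P.image (absorbNull ω D)
      isInterval := Finset.forall_mem_image.2 fun i _ => ordConnected_absorbNull i
      posMeas := Finset.forall_mem_image.2 fun i hi =>
        (hP.1 hi).trans_le (measure_mono (subset_absorbNull hcover i))
      pairwiseDisj := by
        rintro _ hu _ hv huv
        obtain ⟨i, hi, rfl⟩ := Finset.mem_image.1 hu
        obtain ⟨j, hj, rfl⟩ := Finset.mem_image.1 hv
        exact disjoint_absorbNull hconn hdisj (hP.1 hi) (hP.1 hj) (ne_of_apply_ne _ huv)
      cover := by
        ext x
        refine ⟨fun ⟨_, hu, hx⟩ => ?_, fun hx => ?_⟩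
        · obtain ⟨i, -, rfl⟩ := Finset.mem_image.1 hu
          exact hx.1
        · obtain ⟨i, hi, hxi⟩ := exists_pos_mem_absorbNull hex hx
          exact ⟨_, Finset.mem_image_of_mem _ (hP.2 hi), hxi⟩ }
  refine ⟨ρ, fun i => if 0 < ω (D i) then absorbNull ω D i else ∅,
    ⟨fun i => ?_, fun C hC => ?_⟩, fun i => ?_⟩
  · dsimp only
    split_ifs with hi
    exacts [Or.inl (Finset.mem_image_of_mem _ (hP.2 hi)), Or.inr rfl]
  · obtain ⟨i, hi, rfl⟩ := Finset.mem_image.1 hC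
    exact ⟨i, if_pos (hP.1 hi)⟩
  · dsimp only
    split_ifs with hi
    exacts [absorbNull_ae_eq hconn hdisj hcover hi,
      (ae_eq_empty.2 (nonpos_iff_eq_zero.1 (not_lt.1 hi))).symm]

end absorbNull

end Classification

theorem classifications_compact_general (ω : Measure ℝ) [IsProbabilityMeasure ω] (k : ℕ)
    (π : ℕ → Classification ω) (hπ : ∀ m, (π m).parts.card ≤ k) :
    ∃ φ : ℕ → ℕ, StrictMono φ ∧
      ∃ ρ : Classification ω, ρ.parts.card ≤ k ∧
        Filter.Tendsto (fun m => dOmega ω (π (φ m)) ρ) Filter.atTop (nhds 0) := by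
  choose c hc hdisj using fun m => (π m).exists_isEnumeration_fin (hπ m)
  obtain ⟨φ, hφ, D, hDconn, hD⟩ :=
    exists_subseq_eventually_forall_mem_iff fun m => (hc m).ordConnected
  have hDdisj : Pairwise (Disjoint on D) := fun i j hij => disjoint_left.2 fun x hi hj => by
    obtain ⟨m, hm⟩ := (hD x).exists
    exact disjoint_left.1 (hdisj _ hij) ((hm i).2 hi) ((hm j).2 hj)
  have hDcover : ⋃ i, D i = Icc 0 1 := by
    ext x
    obtain ⟨m, hm⟩ := (hD x).exists
    simp only [← (hc (φ m)).iUnion_eq, mem_iUnion, hm]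
  obtain ⟨ρ, f, hf, hfD⟩ :=
    Classification.exists_isEnumeration_ae_eq hDconn hDdisj hDcover (π 0).measure_Icc_pos
  refine ⟨φ, hφ, ρ, hf.card_le.trans_eq (Fintype.card_fin k), ?_⟩
  have hlim : ∀ i, Tendsto (fun m => ω (c (φ m) i ∆ D i)) atTop (𝓝 0) := fun i =>
    tendsto_measure_symmDiff_of_eventually_mem_iff (fun m => ((hc _).ordConnected i).measurableSet)
      (hDconn i).measurableSet fun x => (hD x).mono fun m hm => hm i
  refine tendsto_of_tendsto_of_tendsto_of_le_of_le tendsto_const_nhds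
    (by simpa using tendsto_finsetSum Finset.univ fun i _ => hlim i) (fun _ => zero_le)
    fun m => ?_
  calc dOmega ω (π (φ m)) ρ ≤ ∑ i, ω (c (φ m) i ∆ f i) := Classification.dOmega_le_sum (hc _) hf
    _ = ∑ i, ω (c (φ m) i ∆ D i) :=
      Finset.sum_congr rfl fun i _ => measure_congr ((EventuallyEq.refl _ _).symmDiff (hfD i))

/-- the pseudometric space (Π_{≤k}, d_ω) is compact: every sequence of
classifications with at most k intervals has a subsequence converging in d_ω to some
classification with at most k intervals. -/
theorem classifications_compact (ω : Measure ℝ) [IsProbabilityMeasure ω]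
    (hω : ω (Set.Icc (0 : ℝ) 1) = 1) (k : ℕ)
    (π : ℕ → Classification ω) (hπ : ∀ m, (π m).parts.card ≤ k) :
    ∃ φ : ℕ → ℕ, StrictMono φ ∧
      ∃ ρ : Classification ω, ρ.parts.card ≤ k ∧
        Filter.Tendsto (fun m => dOmega ω (π (φ m)) ρ) Filter.atTop (nhds 0) :=
  classifications_compact_general ω k π hπ

end
end

section
/- Let π₀ = {I} be the trivial classification and suppose there exist a classification π̂ ∈ Π_{≤k} and a competitive allocation (x̂^i) of E(π̂) such that V_i(π̂,x̂^i) > V_i(π₀,y^i) for every agent i and every competitive allocation (y^i) of E(π₀). Then there is a d_ω-open subset O of Π_{≤k} containing π₀ such that for every π ∈ O and every competitive allocation (z^i) of E(π), V_i(π̂,x̂^i) > V_i(π,z^i) for every i; in particular, every competitive configuration based on a classification in O is Pareto-dominated by the competitive configuration ⟨π̂,(x̂^i)⟩. -/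
open MeasureTheory Set
open scoped ENNReal NNReal symmDiff

noncomputable section

/-- The simple function `∑_{C ∈ π} (x_C / ω(C)) 𝟙_C`, as an element of `L¹(ω)`. -/
noncomputable def tradable (ω : Measure ℝ) [IsFiniteMeasure ω] (π : Classification ω)
    (x : Set ℝ → ℝ) : Lp ℝ 1 ω :=
  ∑ C ∈ π.parts.attach,
    indicatorConstLp 1 ((π.isInterval C.1 C.2).measurableSet) (measure_ne_top ω C.1)
      (x C.1 / (ω C.1).toReal)

/-- Utility of a tradable bundle: `V(π,x) = U (∑_C (x_C/ω(C)) 𝟙_C)`. -/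
noncomputable def V (ω : Measure ℝ) [IsFiniteMeasure ω] (U : Lp ℝ 1 ω → ℝ)
    (π : Classification ω) (x : Set ℝ → ℝ) : ℝ :=
  U (tradable ω π x)

/-- The positive cone `L¹(ω)₊`. -/
def PosCone (ω : Measure ℝ) : Set (Lp ℝ 1 ω) :=
  {f | ∀ᵐ t ∂ω, 0 ≤ f t}

/-- `U` is a utility function on `L¹(ω)₊`: concave, norm-continuous and monotone. -/
def IsUtility (ω : Measure ℝ) (U : Lp ℝ 1 ω → ℝ) : Prop :=
  ContinuousOn U (PosCone ω) ∧ ConcaveOn ℝ (PosCone ω) U ∧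
    ∀ f g : Lp ℝ 1 ω, f ∈ PosCone ω → g ∈ PosCone ω →
      (∀ᵐ t ∂ω, g t ≤ f t) → U g ≤ U f

/-- Competitive equilibrium of the economy `E(π)` with claims `κ` and utilities `U`. -/
def IsEquilibrium {n : ℕ} (ω : Measure ℝ) [IsFiniteMeasure ω] (κ : Fin n → ℝ)
    (U : Fin n → Lp ℝ 1 ω → ℝ) (π : Classification ω)
    (p : Set ℝ → ℝ) (x : Fin n → Set ℝ → ℝ) : Prop :=
  (∀ C ∈ π.parts, 0 ≤ p C) ∧
  (∀ i, ∀ C ∈ π.parts, 0 ≤ x i C) ∧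
  (∀ C ∈ π.parts, ∑ i, x i C ≤ (ω C).toReal) ∧
  (∀ i, ∑ C ∈ π.parts, p C * x i C ≤ κ i * ∑ C ∈ π.parts, p C * (ω C).toReal) ∧
  (∀ i, ∀ y : Set ℝ → ℝ, (∀ C ∈ π.parts, 0 ≤ y C) →
    V ω (U i) π (x i) < V ω (U i) π y →
    κ i * ∑ C ∈ π.parts, p C * (ω C).toReal < ∑ C ∈ π.parts, p C * y C)

/-- `(x^i)` is a competitive allocation of `E(π)` if some price supports it. -/
def IsCompetitiveAlloc {n : ℕ} (ω : Measure ℝ) [IsFiniteMeasure ω] (κ : Fin n → ℝ)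
    (U : Fin n → Lp ℝ 1 ω → ℝ) (π : Classification ω)
    (x : Fin n → Set ℝ → ℝ) : Prop :=
  ∃ p : Set ℝ → ℝ, IsEquilibrium ω κ U π p x

/-!
The proportional allocation `(κᵢ 𝟙)` is competitive for the trivial classification, so every
agent strictly prefers `x̂ⁱ` to the constant bundle `κᵢ 𝟙`. A classification with at most `k`
parts that is `d_ω`-close to `π₀` has a part `C₀` of measure close to `1`, so every bundle lies
between step bundles (constant on `C₀` and on its complement) that are `L¹`-close to constant
bundles.

Let `z` be competitive for such an `E(π)`. If agent `i` held more than `(κᵢ + δ) ω(C₀)` of `C₀`,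
its budget constraint would make `C₀` cheap relative to the endowment, and an agent `j` holding
at most its share `κⱼ ω(C₀)` could afford `(1 + δ) κⱼ` times `C₀`. Since `t ↦ Uⱼ (t 𝟙)` is
concave and monotone, it is strictly larger at `(1 + δ) κⱼ` than at `κⱼ`, contradicting the
optimality of `zʲ`. So every agent holds at most `(κᵢ + δ) ω(C₀)` of `C₀`, which for small `δ`
is worth less than `x̂ⁱ`. Only continuity of the `Uᵢ` at finitely many constant bundles is
used, and the triangle inequality for `d_ω` makes the resulting set open.
-/

open Filter Topology

theorem MeasureTheory.Lp.coeFn_finset_sum {α ι : Type*} [MeasurableSpace α] {μ : Measure α}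
    {p : ℝ≥0∞} (s : Finset ι) (f : ι → Lp ℝ p μ) :
    ⇑(∑ i ∈ s, f i) =ᵐ[μ] fun t => ∑ i ∈ s, f i t := by
  classical
  induction s using Finset.induction_on with
  | empty =>
    filter_upwards [Lp.coeFn_zero ℝ p μ] with t ht
    simpa using ht
  | insert i s hi ih =>
    filter_upwards [Lp.coeFn_add (f i) (∑ j ∈ s, f j), ih] with t hadd hsum
    simp only [Finset.sum_insert hi, hadd, Pi.add_apply, hsum]

theorem iSup_iInf_le_add {α : Type*} {d : α → α → ℝ≥0∞}
    (hd : ∀ x y z, d x z ≤ d x y + d y z) (A B C : Set α) :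
    ⨆ x ∈ A, ⨅ z ∈ C, d x z ≤ (⨆ x ∈ A, ⨅ y ∈ B, d x y) + ⨆ y ∈ B, ⨅ z ∈ C, d y z := by
  refine iSup₂_le fun x hx => ?_
  have hvia : ∀ y ∈ B, ⨅ z ∈ C, d x z ≤ d x y + ⨆ y ∈ B, ⨅ z ∈ C, d y z := fun y hy =>
    calc ⨅ z ∈ C, d x z ≤ ⨅ z ∈ C, (d x y + d y z) := iInf₂_mono fun z _ => hd x y z
      _ = d x y + ⨅ z ∈ C, d y z := by simp only [ENNReal.add_iInf]
      _ ≤ _ := add_le_add le_rfl (le_iSup₂_of_le y hy le_rfl)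
  calc ⨅ z ∈ C, d x z ≤ (⨅ y ∈ B, d x y) + ⨆ y ∈ B, ⨅ z ∈ C, d y z := by
        simpa only [ENNReal.iInf_add] using le_iInf₂ hvia
    _ ≤ _ := add_le_add (le_iSup₂_of_le x hx le_rfl) le_rfl

theorem ConcaveOn.lt_of_monotoneOn {s : Set ℝ} {f : ℝ → ℝ} (hf : ConcaveOn ℝ s f)
    (hmono : MonotoneOn f s) {a b c : ℝ} (ha : a ∈ s) (hb : b ∈ s) (hc : c ∈ s) (hab : a < b)
    (hac : f a < f c) : f a < f b := by
  rcases le_or_gt c b with hcb | hbc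
  · exact hac.trans_le (hmono hc hb hcb)
  by_contra! hba
  have hslope := hf.slope_anti_adjacent ha hc hab hbc
  have hright : (f b - f a) / (b - a) ≤ 0 :=
    div_nonpos_of_nonpos_of_nonneg (by linarith) (by linarith)
  have hcb := (div_le_iff₀ (sub_pos.2 hbc)).1 (hslope.trans hright)
  linarith

section Classification

variable {ω : Measure ℝ}

theorem Classification.iUnion_parts (π : Classification ω) :
    ⋃ C ∈ π.parts, C = Icc (0 : ℝ) 1 := by
  rw [← π.cover, sUnion_eq_biUnion]
  rfl

theorem mem_sigmaAlg_of_mem_parts {π : Classification ω} {C : Set ℝ} (hC : C ∈ π.parts) :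
    C ∈ sigmaAlg π :=
  ⟨{C}, Finset.singleton_subset_iff.2 hC, by simp⟩

theorem sigmaAlg_of_parts_eq_singleton {π₀ : Classification ω}
    (hπ₀ : (π₀.parts : Set (Set ℝ)) = {Icc (0 : ℝ) 1}) {B : Set ℝ} (hB : B ∈ sigmaAlg π₀) :
    B = ∅ ∨ B = Icc (0 : ℝ) 1 := by
  obtain ⟨S, hS, rfl⟩ := hB
  rw [Finset.coe_eq_singleton.1 hπ₀, Finset.subset_singleton_iff] at hS
  rcases hS with rfl | rfl <;> simp

theorem deltaOmega_self (π : Classification ω) : deltaOmega ω π π = 0 :=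
  le_antisymm (iSup₂_le fun C hC => iInf₂_le_of_le C hC (by simp)) bot_le

theorem deltaOmega_triangle (π₁ π₂ π₃ : Classification ω) :
    deltaOmega ω π₁ π₃ ≤ deltaOmega ω π₁ π₂ + deltaOmega ω π₂ π₃ :=
  iSup_iInf_le_add measure_symmDiff_le _ _ _

theorem dOmega_self (π : Classification ω) : dOmega ω π π = 0 := by
  simp [dOmega, deltaOmega_self]

theorem dOmega_triangle (π₁ π₂ π₃ : Classification ω) :
    dOmega ω π₁ π₃ ≤ dOmega ω π₁ π₂ + dOmega ω π₂ π₃ :=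
  max_le ((deltaOmega_triangle π₁ π₂ π₃).trans (add_le_add (le_max_left _ _) (le_max_left _ _)))
    ((deltaOmega_triangle π₃ π₂ π₁).trans_eq (add_comm _ _) |>.trans
      (add_le_add (le_max_right _ _) (le_max_right _ _)))

theorem exists_dOmega_lt_of_dOmega_lt {π₀ π : Classification ω} {r : ℝ≥0∞}
    (h : dOmega ω π₀ π < r) :
    ∃ ε > 0, ∀ ρ : Classification ω, dOmega ω π ρ < ε → dOmega ω π₀ ρ < r := by
  refine ⟨r - dOmega ω π₀ π, tsub_pos_of_lt h, fun ρ hρ => ?_⟩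
  calc dOmega ω π₀ ρ ≤ dOmega ω π₀ π + dOmega ω π ρ := dOmega_triangle π₀ π ρ
    _ < dOmega ω π₀ π + (r - dOmega ω π₀ π) := ENNReal.add_lt_add_left h.ne_top hρ
    _ = r := add_tsub_cancel_of_le h.le

variable [IsFiniteMeasure ω]

theorem Classification.measure_toReal_pos (π : Classification ω) {C : Set ℝ}
    (hC : C ∈ π.parts) : 0 < (ω C).toReal :=
  ENNReal.toReal_pos (π.posMeas C hC).ne' (measure_ne_top ω C)

theorem Classification.sum_measure_toReal (π : Classification ω) :
    ∑ C ∈ π.parts, (ω C).toReal = (ω (Icc (0 : ℝ) 1)).toReal := by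
  rw [← ENNReal.toReal_sum fun C _ => measure_ne_top ω C, ← π.iUnion_parts]
  exact congrArg ENNReal.toReal
    (measure_biUnion_finset π.pairwiseDisj fun C hC => (π.isInterval C hC).measurableSet).symm

theorem measure_lt_or_one_sub_lt_of_deltaOmega_lt (hω : ω (Icc (0 : ℝ) 1) = 1)
    {π₀ : Classification ω} (hπ₀ : (π₀.parts : Set (Set ℝ)) = {Icc (0 : ℝ) 1})
    {π : Classification ω} {ε : ℝ} (hδ : deltaOmega ω π π₀ < ENNReal.ofReal ε) {C : Set ℝ}
    (hC : C ∈ π.parts) : (ω C).toReal < ε ∨ 1 - ε < (ω C).toReal := by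
  obtain ⟨B, hB, hCB⟩ : ∃ B ∈ sigmaAlg π₀, ω (C ∆ B) < ENNReal.ofReal ε := by
    simpa only [iInf_lt_iff, exists_prop] using
      (le_iSup₂ (f := fun C _ => ⨅ B ∈ sigmaAlg π₀, ω (C ∆ B)) C
        (mem_sigmaAlg_of_mem_parts hC)).trans_lt hδ
  replace hCB := ENNReal.toReal_lt_of_lt_ofReal hCB
  rcases sigmaAlg_of_parts_eq_singleton hπ₀ hB with rfl | rfl
  · left
    rwa [← bot_eq_empty, symmDiff_bot] at hCB
  · right
    have hCI : C ⊆ Icc (0 : ℝ) 1 := π.cover ▸ subset_sUnion_of_mem hC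
    rw [symmDiff_of_le hCI, ← measureReal_def,
      measureReal_sdiff hCI (π.isInterval C hC).measurableSet, measureReal_def,
      measureReal_def, hω, ENNReal.toReal_one] at hCB
    linarith

theorem exists_large_part_of_deltaOmega_lt (hω : ω (Icc (0 : ℝ) 1) = 1)
    {π₀ : Classification ω} (hπ₀ : (π₀.parts : Set (Set ℝ)) = {Icc (0 : ℝ) 1})
    {π : Classification ω} {k : ℕ} (hcard : π.parts.card ≤ k) {ε : ℝ} (hkε : k * ε < 1)
    (hδ : deltaOmega ω π π₀ < ENNReal.ofReal ε) :
    ∃ C₀ ∈ π.parts, 1 - ε < (ω C₀).toReal := by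
  have hε : 0 < ε := ENNReal.ofReal_pos.1 (bot_le.trans_lt hδ)
  by_contra! hsmall
  have : (1 : ℝ) ≤ k * ε := calc
    (1 : ℝ) = ∑ C ∈ π.parts, (ω C).toReal := by rw [π.sum_measure_toReal, hω, ENNReal.toReal_one]
    _ ≤ π.parts.card • ε := Finset.sum_le_card_nsmul _ _ _ fun C hC =>
        ((measure_lt_or_one_sub_lt_of_deltaOmega_lt hω hπ₀ hδ hC).resolve_right
          (hsmall C hC).not_gt).le
    _ ≤ k * ε := by
        rw [nsmul_eq_mul]
        exact mul_le_mul_of_nonneg_right (by exact_mod_cast hcard) hε.le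
  linarith

end Classification

section Tradable

variable {ω : Measure ℝ} [IsFiniteMeasure ω]

def unitIntervalIndicator (ω : Measure ℝ) [IsFiniteMeasure ω] : Lp ℝ 1 ω :=
  indicatorConstLp 1 (measurableSet_Icc : MeasurableSet (Icc (0 : ℝ) 1)) (measure_ne_top ω _) 1

theorem coeFn_unitIntervalIndicator :
    ⇑(unitIntervalIndicator ω) =ᵐ[ω] (Icc (0 : ℝ) 1).indicator 1 :=
  indicatorConstLp_coeFn

theorem smul_unitIntervalIndicator_mono {a b : ℝ} (hab : a ≤ b) :
    a • unitIntervalIndicator ω ≤ b • unitIntervalIndicator ω := by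
  rw [← Lp.coeFn_le]
  filter_upwards [Lp.coeFn_smul a (unitIntervalIndicator ω),
    Lp.coeFn_smul b (unitIntervalIndicator ω), coeFn_unitIntervalIndicator (ω := ω)]
    with t ha hb hind
  simp only [ha, hb, Pi.smul_apply, hind, smul_eq_mul]
  by_cases ht : t ∈ Icc (0 : ℝ) 1 <;> simp [ht, hab]

theorem smul_unitIntervalIndicator_nonneg {a : ℝ} (ha : 0 ≤ a) :
    0 ≤ a • unitIntervalIndicator ω := by
  simpa using smul_unitIntervalIndicator_mono (ω := ω) ha

theorem tradable_congr (π : Classification ω) {x y : Set ℝ → ℝ}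
    (h : ∀ C ∈ π.parts, x C = y C) : tradable ω π x = tradable ω π y :=
  Finset.sum_congr rfl fun C _ => by simp only [h C.1 C.2]

theorem coeFn_tradable (π : Classification ω) (x : Set ℝ → ℝ) :
    ⇑(tradable ω π x) =ᵐ[ω]
      fun t => ∑ C ∈ π.parts, C.indicator (fun _ => x C / (ω C).toReal) t := by
  have hparts : ∀ᵐ t ∂ω, ∀ C ∈ π.parts.attach,
      indicatorConstLp 1 ((π.isInterval C.1 C.2).measurableSet) (measure_ne_top ω C.1)
        (x C.1 / (ω C.1).toReal) t = C.1.indicator (fun _ => x C.1 / (ω C.1).toReal) t :=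
    (Filter.eventually_all_finset _).2 fun C _ => indicatorConstLp_coeFn
  filter_upwards [Lp.coeFn_finset_sum _ _, hparts] with t hsum hpart
  rw [tradable, hsum, Finset.sum_congr rfl hpart]
  exact Finset.sum_attach π.parts (fun C => C.indicator (fun _ => x C / (ω C).toReal) t)

theorem tradable_mono (π : Classification ω) {x y : Set ℝ → ℝ}
    (h : ∀ C ∈ π.parts, x C ≤ y C) : tradable ω π x ≤ tradable ω π y := by
  rw [← Lp.coeFn_le]
  filter_upwards [coeFn_tradable π x, coeFn_tradable π y] with t hx hy
  rw [hx, hy]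
  refine Finset.sum_le_sum fun C hC => indicator_le_indicator ?_
  exact div_le_div_of_nonneg_right (h C hC) ENNReal.toReal_nonneg

theorem tradable_nonneg (π : Classification ω) {x : Set ℝ → ℝ}
    (h : ∀ C ∈ π.parts, 0 ≤ x C) : 0 ≤ tradable ω π x := by
  rw [← Lp.coeFn_nonneg]
  filter_upwards [coeFn_tradable π x] with t ht
  rw [ht]
  exact Finset.sum_nonneg fun C hC =>
    indicator_nonneg (fun _ _ => div_nonneg (h C hC) ENNReal.toReal_nonneg) t

theorem tradable_mul_measure (π : Classification ω) (c : ℝ) :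
    tradable ω π (fun C => c * (ω C).toReal) = c • unitIntervalIndicator ω := by
  ext1
  filter_upwards [coeFn_tradable π _, Lp.coeFn_smul c (unitIntervalIndicator ω),
    coeFn_unitIntervalIndicator (ω := ω)] with t htr hsmul hind
  have hcancel : ∀ C ∈ π.parts, c * (ω C).toReal / (ω C).toReal = c := fun C hC =>
    mul_div_cancel_right₀ c (π.measure_toReal_pos hC).ne'
  rw [htr, hsmul, Pi.smul_apply, hind, ← π.iUnion_parts,
    Finset.indicator_biUnion_apply π.parts (fun C => C) π.pairwiseDisj]
  simp only [Finset.smul_sum]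
  refine Finset.sum_congr rfl fun C hC => ?_
  by_cases ht : t ∈ C <;> simp [ht, hcancel C hC]

theorem norm_tradable_sub_le (π : Classification ω) (x y : Set ℝ → ℝ) :
    ‖tradable ω π x - tradable ω π y‖ ≤ ∑ C ∈ π.parts, |x C - y C| := by
  rw [tradable, tradable, ← Finset.sum_sub_distrib, ← Finset.sum_attach π.parts]
  refine (norm_sum_le _ _).trans (Finset.sum_le_sum fun C _ => le_of_eq ?_)
  rw [indicatorConstLp_sub, norm_indicatorConstLp one_ne_zero ENNReal.one_ne_top,
    ← sub_div, Real.norm_eq_abs, abs_div, measureReal_def,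
    abs_of_pos (π.measure_toReal_pos C.2)]
  simp [div_mul_cancel₀ _ (π.measure_toReal_pos C.2).ne']

end Tradable

section Utility

variable {ω : Measure ℝ} {U : Lp ℝ 1 ω → ℝ}

theorem mem_posCone_iff {f : Lp ℝ 1 ω} : f ∈ PosCone ω ↔ 0 ≤ f :=
  Lp.coeFn_nonneg f

theorem IsUtility.mono (hU : IsUtility ω U) {f g : Lp ℝ 1 ω} (hg : 0 ≤ g) (hgf : g ≤ f) :
    U g ≤ U f :=
  hU.2.2 f g (mem_posCone_iff.2 (hg.trans hgf)) (mem_posCone_iff.2 hg) ((Lp.coeFn_le g f).2 hgf)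

variable [IsFiniteMeasure ω]

def constUtility (ω : Measure ℝ) [IsFiniteMeasure ω] (U : Lp ℝ 1 ω → ℝ) (t : ℝ) : ℝ :=
  U (t • unitIntervalIndicator ω)

theorem V_mul_measure (U : Lp ℝ 1 ω → ℝ) (π : Classification ω) (c : ℝ) :
    V ω U π (fun C => c * (ω C).toReal) = constUtility ω U c :=
  congrArg U (tradable_mul_measure π c)

namespace IsUtility

theorem V_mono (hU : IsUtility ω U) (π : Classification ω) {x y : Set ℝ → ℝ}
    (hx : ∀ C ∈ π.parts, 0 ≤ x C) (hxy : ∀ C ∈ π.parts, x C ≤ y C) :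
    V ω U π x ≤ V ω U π y :=
  hU.mono (tradable_nonneg π hx) (tradable_mono π hxy)

theorem monotoneOn_constUtility (hU : IsUtility ω U) : MonotoneOn (constUtility ω U) (Ici 0) :=
  fun _ ha _ _ hab => hU.mono (smul_unitIntervalIndicator_nonneg ha)
    (smul_unitIntervalIndicator_mono hab)

theorem concaveOn_constUtility (hU : IsUtility ω U) : ConcaveOn ℝ (Ici 0) (constUtility ω U) :=
  (hU.2.1.comp_linearMap (LinearMap.toSpanSingleton ℝ _ (unitIntervalIndicator ω))).subset
    (fun _ ht => mem_posCone_iff.2 (smul_unitIntervalIndicator_nonneg ht)) (convex_Ici 0)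

theorem continuousAt_constUtility (hU : IsUtility ω U) {t : ℝ} (ht : 0 < t) :
    ContinuousAt (constUtility ω U) t := by
  have hcont : ContinuousOn (constUtility ω U) (Ici 0) :=
    hU.1.comp (continuous_id.smul continuous_const).continuousOn
      fun _ hs => mem_posCone_iff.2 (smul_unitIntervalIndicator_nonneg hs)
  exact hcont.continuousAt (Ici_mem_nhds ht)

end IsUtility

end Utility

section StepBundle

variable {ω : Measure ℝ}

open Classical in
def stepBundle (ω : Measure ℝ) (C₀ : Set ℝ) (a b : ℝ) : Set ℝ → ℝ :=
  fun C => (if C = C₀ then a else b) * (ω C).toReal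

theorem stepBundle_nonneg (C₀ : Set ℝ) {a b : ℝ} (ha : 0 ≤ a) (hb : 0 ≤ b) (C : Set ℝ) :
    0 ≤ stepBundle ω C₀ a b C := by
  unfold stepBundle
  split_ifs <;> positivity

theorem sum_mul_stepBundle_zero {π : Classification ω} {C₀ : Set ℝ} (hC₀ : C₀ ∈ π.parts)
    (p : Set ℝ → ℝ) (a : ℝ) :
    ∑ C ∈ π.parts, p C * stepBundle ω C₀ a 0 C = a * (p C₀ * (ω C₀).toReal) := by
  rw [Finset.sum_eq_single_of_mem C₀ hC₀ fun C _ hC => by simp [stepBundle, hC]]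
  simp only [stepBundle, ↓reduceIte]
  ring

variable [IsFiniteMeasure ω]

theorem norm_tradable_stepBundle_sub_le (hω : ω (Icc (0 : ℝ) 1) = 1) {π : Classification ω}
    {C₀ : Set ℝ} (hC₀ : C₀ ∈ π.parts) (a b : ℝ) :
    ‖tradable ω π (stepBundle ω C₀ a b) - a • unitIntervalIndicator ω‖
      ≤ |b - a| * (1 - (ω C₀).toReal) := by
  rw [← tradable_mul_measure π a]
  refine (norm_tradable_sub_le π _ _).trans (le_of_eq ?_)
  have hrest : ∀ C ∈ π.parts.erase C₀,
      |stepBundle ω C₀ a b C - a * (ω C).toReal| = |b - a| * (ω C).toReal := fun C hC => by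
    rw [stepBundle, if_neg (Finset.ne_of_mem_erase hC), ← sub_mul, abs_mul,
      abs_of_nonneg ENNReal.toReal_nonneg]
  rw [← Finset.add_sum_erase _ _ hC₀, Finset.sum_congr rfl hrest, ← Finset.mul_sum,
    Finset.sum_erase_eq_sub hC₀, π.sum_measure_toReal, hω]
  simp [stepBundle]

theorem eventually_utility_stepBundle (hω : ω (Icc (0 : ℝ) 1) = 1) {U : Lp ℝ 1 ω → ℝ}
    (hU : IsUtility ω U) {a b : ℝ} (ha : 0 ≤ a) (hb : 0 ≤ b) {P : ℝ → Prop}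
    (hP : ∀ᶠ v in 𝓝 (constUtility ω U a), P v) :
    ∀ᶠ s in 𝓝 (0 : ℝ), ∀ π : Classification ω, ∀ C₀ ∈ π.parts,
      1 - s < (ω C₀).toReal → P (V ω U π (stepBundle ω C₀ a b)) := by
  have hcont := hU.1 _ (mem_posCone_iff.2 (smul_unitIntervalIndicator_nonneg (ω := ω) ha))
  obtain ⟨r, hr, hball⟩ := Metric.mem_nhdsWithin_iff.1 (hcont.eventually hP)
  have hsmall : ∀ᶠ s in 𝓝 (0 : ℝ), |b - a| * s < r := by
    have : Tendsto (fun s : ℝ => |b - a| * s) (𝓝 0) (𝓝 0) :=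
      (continuous_const_mul |b - a|).tendsto' 0 0 (mul_zero _)
    exact this.eventually (gt_mem_nhds hr)
  filter_upwards [hsmall] with s hs π C₀ hC₀ hbig
  refine hball ⟨?_, mem_posCone_iff.2 (tradable_nonneg π fun C _ => stepBundle_nonneg C₀ ha hb C)⟩
  rw [Metric.mem_ball, dist_eq_norm]
  calc _ ≤ |b - a| * (1 - (ω C₀).toReal) := norm_tradable_stepBundle_sub_le hω hC₀ a b
    _ ≤ |b - a| * s := mul_le_mul_of_nonneg_left (by linarith) (abs_nonneg _)
    _ < r := hs

end StepBundle

section Equilibrium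

variable {ω : Measure ℝ} [IsFiniteMeasure ω] {n : ℕ} {κ : Fin n → ℝ}
  {U : Fin n → Lp ℝ 1 ω → ℝ} {π : Classification ω} {p : Set ℝ → ℝ} {z : Fin n → Set ℝ → ℝ}

namespace IsEquilibrium

theorem le_measure (hp : IsEquilibrium ω κ U π p z) (i : Fin n) {C : Set ℝ}
    (hC : C ∈ π.parts) : z i C ≤ (ω C).toReal :=
  (Finset.single_le_sum (fun l _ => hp.2.1 l C hC) (Finset.mem_univ i)).trans (hp.2.2.1 C hC)

theorem utility_le_of_affordable (hp : IsEquilibrium ω κ U π p z) (i : Fin n)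
    {y : Set ℝ → ℝ} (hy : ∀ C ∈ π.parts, 0 ≤ y C)
    (hcost : ∑ C ∈ π.parts, p C * y C ≤ κ i * ∑ C ∈ π.parts, p C * (ω C).toReal) :
    V ω (U i) π y ≤ V ω (U i) π (z i) :=
  le_of_not_gt fun h => (hp.2.2.2.2 i y hy h).not_ge hcost

theorem utility_le_constUtility_one (hp : IsEquilibrium ω κ U π p z) {i : Fin n}
    (hU : IsUtility ω (U i)) : V ω (U i) π (z i) ≤ constUtility ω (U i) 1 :=
  (hU.V_mono π (hp.2.1 i) fun _ hC => (hp.le_measure i hC).trans_eq (one_mul _).symm).trans_eq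
    (V_mul_measure (U i) π 1)

theorem utility_le_stepBundle (hp : IsEquilibrium ω κ U π p z) {i : Fin n}
    (hU : IsUtility ω (U i)) {C₀ : Set ℝ} (hC₀ : C₀ ∈ π.parts) {c : ℝ}
    (hc : z i C₀ ≤ c * (ω C₀).toReal) :
    V ω (U i) π (z i) ≤ V ω (U i) π (stepBundle ω C₀ c 1) :=
  hU.V_mono π (hp.2.1 i) fun C hC => by
    by_cases h : C = C₀
    · subst h
      simpa [stepBundle] using hc
    · simpa [stepBundle, h] using hp.le_measure i hC

theorem utility_lt (hp : IsEquilibrium ω κ U π p z) (hκpos : ∀ i, 0 < κ i)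
    (hκsum : ∑ i, κ i = 1) (hU : ∀ i, IsUtility ω (U i)) {C₀ : Set ℝ} (hC₀ : C₀ ∈ π.parts)
    {δ : ℝ} (hδ : 0 < δ) {v : Fin n → ℝ}
    (hnear : ∀ i, V ω (U i) π (stepBundle ω C₀ (κ i + δ) 1) < v i)
    (hgain : ∀ j, V ω (U j) π (stepBundle ω C₀ (κ j) 1)
      < V ω (U j) π (stepBundle ω C₀ ((1 + δ) * κ j) 0))
    (i : Fin n) : V ω (U i) π (z i) < v i := by
  obtain hci | hci := le_or_gt (z i C₀) ((κ i + δ) * (ω C₀).toReal)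
  · exact (hp.utility_le_stepBundle (hU i) hC₀ hci).trans_lt (hnear i)
  exfalso
  set q := p C₀ * (ω C₀).toReal
  set M := ∑ C ∈ π.parts, p C * (ω C).toReal
  obtain ⟨j, -, hj⟩ : ∃ j ∈ Finset.univ, z j C₀ ≤ κ j * (ω C₀).toReal := by
    refine Finset.exists_le_of_sum_le (Finset.nonempty_of_sum_ne_zero (hκsum ▸ one_ne_zero)) ?_
    rw [← Finset.sum_mul, hκsum, one_mul]
    exact hp.2.2.1 C₀ hC₀
  have hκi : κ i ≤ 1 :=
    hκsum ▸ Finset.single_le_sum (fun l _ => (hκpos l).le) (Finset.mem_univ i)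
  have hq : 0 ≤ q := mul_nonneg (hp.1 C₀ hC₀) ENNReal.toReal_nonneg
  have hbudget : (κ i + δ) * q ≤ κ i * M := by
    have hspent := (Finset.single_le_sum (fun C hC => mul_nonneg (hp.1 C hC) (hp.2.1 i C hC))
      hC₀).trans (hp.2.2.2.1 i)
    have := mul_le_mul_of_nonneg_left hci.le (hp.1 C₀ hC₀)
    linarith
  -- `C₀` is cheap: the whole endowment is worth at least `(1 + δ)` times `C₀`.
  have hM : (1 + δ) * q ≤ M := le_of_mul_le_mul_left
    (by nlinarith [mul_nonneg (sub_nonneg.2 hκi) (mul_nonneg hδ.le hq)]) (hκpos i)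
  have hafford := hp.utility_le_of_affordable j (y := stepBundle ω C₀ ((1 + δ) * κ j) 0)
    (fun C _ => stepBundle_nonneg C₀ (by nlinarith [hκpos j]) le_rfl C) (by
      rw [sum_mul_stepBundle_zero hC₀]
      nlinarith [mul_le_mul_of_nonneg_left hM (hκpos j).le])
  exact (hgain j).not_ge (hafford.trans (hp.utility_le_stepBundle (hU j) hC₀ hj))

end IsEquilibrium

end Equilibrium

section TrivialClassification

variable {ω : Measure ℝ} [IsFiniteMeasure ω]

theorem V_of_parts_eq_singleton (hω : ω (Icc (0 : ℝ) 1) = 1) {π₀ : Classification ω}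
    (hπ₀ : (π₀.parts : Set (Set ℝ)) = {Icc (0 : ℝ) 1}) (U : Lp ℝ 1 ω → ℝ) (y : Set ℝ → ℝ) :
    V ω U π₀ y = constUtility ω U (y (Icc 0 1)) := by
  rw [← V_mul_measure U π₀, V, V, tradable_congr π₀ fun C hC => ?_]
  rw [Finset.coe_eq_singleton.1 hπ₀, Finset.mem_singleton] at hC
  rw [hC, hω, ENNReal.toReal_one, mul_one]

theorem isCompetitiveAlloc_proportional (hω : ω (Icc (0 : ℝ) 1) = 1) {n : ℕ}
    {κ : Fin n → ℝ} (hκpos : ∀ i, 0 < κ i) (hκsum : ∑ i, κ i = 1)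
    {U : Fin n → Lp ℝ 1 ω → ℝ} (hU : ∀ i, IsUtility ω (U i)) {π₀ : Classification ω}
    (hπ₀ : (π₀.parts : Set (Set ℝ)) = {Icc (0 : ℝ) 1}) :
    IsCompetitiveAlloc ω κ U π₀ (fun i _ => κ i) := by
  have hparts := Finset.coe_eq_singleton.1 hπ₀
  refine ⟨fun _ => 1, fun _ _ => zero_le_one, fun i _ _ => (hκpos i).le, ?_, ?_, ?_⟩
  · simp [hparts, hω, hκsum]
  · simp [hparts, hω]
  · intro i y hy hpref
    rw [V_of_parts_eq_singleton hω hπ₀, V_of_parts_eq_singleton hω hπ₀] at hpref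
    have hyI : 0 ≤ y (Icc 0 1) := hy _ (by simp [hparts])
    simpa [hparts, hω] using lt_of_not_ge fun hle =>
      hpref.not_ge ((hU i).monotoneOn_constUtility hyI (hκpos i).le hle)

end TrivialClassification

theorem exists_forall_utility_lt_of_large_part {ω : Measure ℝ} [IsFiniteMeasure ω]
    (hω : ω (Icc (0 : ℝ) 1) = 1) {n : ℕ} {κ : Fin n → ℝ} (hκpos : ∀ i, 0 < κ i)
    (hκsum : ∑ i, κ i = 1) {U : Fin n → Lp ℝ 1 ω → ℝ} (hU : ∀ i, IsUtility ω (U i))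
    {v : Fin n → ℝ} (hlow : ∀ i, constUtility ω (U i) (κ i) < v i)
    (hup : ∀ i, v i ≤ constUtility ω (U i) 1) :
    ∃ s > 0, ∀ π : Classification ω, ∀ C₀ ∈ π.parts, 1 - s < (ω C₀).toReal →
      ∀ z, IsCompetitiveAlloc ω κ U π z → ∀ i, V ω (U i) π (z i) < v i := by
  obtain ⟨δ, hδ, hnear⟩ : ∃ δ > 0, ∀ i, constUtility ω (U i) (κ i + δ) < v i := by
    refine (Filter.eventually_all.2 fun i => ?_).exists_gt
    have hshift : Tendsto (κ i + ·) (𝓝 0) (𝓝 (κ i)) :=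
      (continuous_const_add (κ i)).tendsto' 0 (κ i) (add_zero _)
    exact (((hU i).continuousAt_constUtility (hκpos i)).tendsto.comp hshift).eventually
      (eventually_lt_nhds (hlow i))
  have hgain : ∀ i, constUtility ω (U i) (κ i) < constUtility ω (U i) ((1 + δ) * κ i) :=
    fun i => (hU i).concaveOn_constUtility.lt_of_monotoneOn (hU i).monotoneOn_constUtility
      (hκpos i).le (mem_Ici.2 (by nlinarith [hκpos i])) (mem_Ici.2 zero_le_one)
      (by nlinarith [hκpos i]) ((hlow i).trans_le (hup i))
  choose m hm using fun i => exists_between (hgain i)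
  have hstep : ∀ i, ∀ᶠ s in 𝓝 (0 : ℝ), ∀ π : Classification ω, ∀ C₀ ∈ π.parts,
      1 - s < (ω C₀).toReal →
        V ω (U i) π (stepBundle ω C₀ (κ i + δ) 1) < v i ∧
        V ω (U i) π (stepBundle ω C₀ (κ i) 1)
          < V ω (U i) π (stepBundle ω C₀ ((1 + δ) * κ i) 0) := fun i => by
    have hκδ : 0 ≤ κ i + δ := by linarith [hκpos i]
    have hκ1δ : 0 ≤ (1 + δ) * κ i := by nlinarith [hκpos i]
    filter_upwards [eventually_utility_stepBundle hω (hU i) hκδ zero_le_one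
        (eventually_lt_nhds (hnear i)),
      eventually_utility_stepBundle hω (hU i) (hκpos i).le zero_le_one
        (eventually_lt_nhds (hm i).1),
      eventually_utility_stepBundle hω (hU i) hκ1δ le_rfl (eventually_gt_nhds (hm i).2)]
      with s h₁ h₂ h₃ π C₀ hC₀ hbig
    exact ⟨h₁ π C₀ hC₀ hbig, (h₂ π C₀ hC₀ hbig).trans (h₃ π C₀ hC₀ hbig)⟩
  obtain ⟨s, hs, hsmall⟩ := (Filter.eventually_all.2 hstep).exists_gt
  refine ⟨s, hs, fun π C₀ hC₀ hbig z ⟨p, hp⟩ => hp.utility_lt hκpos hκsum hU hC₀ hδ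
    (fun i => (hsmall i π C₀ hC₀ hbig).1) (fun i => (hsmall i π C₀ hC₀ hbig).2)⟩

theorem open_set_of_dominated_general (ω : Measure ℝ) [IsProbabilityMeasure ω]
    (hω : ω (Set.Icc (0 : ℝ) 1) = 1)
    (n : ℕ) (κ : Fin n → ℝ) (hκpos : ∀ i, 0 < κ i) (hκsum : ∑ i, κ i = 1)
    (U : Fin n → Lp ℝ 1 ω → ℝ) (hU : ∀ i, IsUtility ω (U i))
    (k : ℕ) (hk : 1 ≤ k)
    (π₀ : Classification ω) (hπ₀ : (π₀.parts : Set (Set ℝ)) = {Set.Icc (0 : ℝ) 1})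
    (πh : Classification ω)
    (xh : Fin n → Set ℝ → ℝ) (hxh : IsCompetitiveAlloc ω κ U πh xh)
    (hdom : ∀ y : Fin n → Set ℝ → ℝ, IsCompetitiveAlloc ω κ U π₀ y →
      ∀ i, V ω (U i) π₀ (y i) < V ω (U i) πh (xh i)) :
    ∃ O : Set (Classification ω),
      π₀ ∈ O ∧
      (∀ π ∈ O, π.parts.card ≤ k) ∧
      (∀ π ∈ O, ∃ ε : ℝ≥0∞, 0 < ε ∧
        ∀ ρ : Classification ω, ρ.parts.card ≤ k → dOmega ω π ρ < ε → ρ ∈ O) ∧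
      (∀ π ∈ O, ∀ z : Fin n → Set ℝ → ℝ, IsCompetitiveAlloc ω κ U π z →
        ∀ i, V ω (U i) π (z i) < V ω (U i) πh (xh i)) := by
  have hlow : ∀ i, constUtility ω (U i) (κ i) < V ω (U i) πh (xh i) := fun i => by
    simpa [V_of_parts_eq_singleton hω hπ₀] using
      hdom _ (isCompetitiveAlloc_proportional hω hκpos hκsum hU hπ₀) i
  obtain ⟨ph, hph⟩ := hxh
  obtain ⟨s, hs, hlarge⟩ := exists_forall_utility_lt_of_large_part hω hκpos hκsum hU hlow
    fun i => hph.utility_le_constUtility_one (hU i)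
  set ε := min s (1 / (k + 1))
  have hε : 0 < ε := lt_min hs (by positivity)
  have hkε : k * ε < 1 := calc
    k * ε ≤ k * (1 / (k + 1)) := mul_le_mul_of_nonneg_left (min_le_right _ _) k.cast_nonneg
    _ < 1 := by rw [mul_one_div, div_lt_one (by positivity)]; linarith
  refine ⟨{π | π.parts.card ≤ k ∧ dOmega ω π₀ π < ENNReal.ofReal ε}, ⟨?_, ?_⟩,
    fun π hπ => hπ.1, fun π hπ => ?_, fun π hπ z hz i => ?_⟩
  · simpa [Finset.coe_eq_singleton.1 hπ₀] using hk
  · simpa [dOmega_self] using hε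
  · obtain ⟨r, hr, hball⟩ := exists_dOmega_lt_of_dOmega_lt hπ.2
    exact ⟨r, hr, fun ρ hρ hdist => ⟨hρ, hball ρ hdist⟩⟩
  · obtain ⟨C₀, hC₀, hbig⟩ :=
      exists_large_part_of_deltaOmega_lt hω hπ₀ hπ.1 hkε ((le_max_right _ _).trans_lt hπ.2)
    exact hlarge π C₀ hC₀ (by linarith [min_le_left s (1 / (k + 1))]) z hz i

/-- if a competitive configuration `⟨πh,(xh^i)⟩` with `πh ∈ Π_{≤k}` gives
every agent strictly more utility than every competitive allocation of the trivial
classification `π₀ = {I}`, then there is a `d_ω`-open subset `O` of `Π_{≤k}` containing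
`π₀` such that every competitive configuration based on a classification in `O` is
Pareto-dominated by `⟨πh,(xh^i)⟩`. -/
theorem open_set_of_dominated (ω : Measure ℝ) [IsProbabilityMeasure ω]
    (hω : ω (Set.Icc (0 : ℝ) 1) = 1)
    (n : ℕ) (κ : Fin n → ℝ) (hκpos : ∀ i, 0 < κ i) (hκsum : ∑ i, κ i = 1)
    (U : Fin n → Lp ℝ 1 ω → ℝ) (hU : ∀ i, IsUtility ω (U i))
    (k : ℕ) (hk : 1 ≤ k)
    (π₀ : Classification ω) (hπ₀ : (π₀.parts : Set (Set ℝ)) = {Set.Icc (0 : ℝ) 1})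
    (πh : Classification ω) (hπh : πh.parts.card ≤ k)
    (xh : Fin n → Set ℝ → ℝ) (hxh : IsCompetitiveAlloc ω κ U πh xh)
    (hdom : ∀ y : Fin n → Set ℝ → ℝ, IsCompetitiveAlloc ω κ U π₀ y →
      ∀ i, V ω (U i) π₀ (y i) < V ω (U i) πh (xh i)) :
    ∃ O : Set (Classification ω),
      π₀ ∈ O ∧
      (∀ π ∈ O, π.parts.card ≤ k) ∧
      (∀ π ∈ O, ∃ ε : ℝ≥0∞, 0 < ε ∧
        ∀ ρ : Classification ω, ρ.parts.card ≤ k → dOmega ω π ρ < ε → ρ ∈ O) ∧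
      (∀ π ∈ O, ∀ z : Fin n → Set ℝ → ℝ, IsCompetitiveAlloc ω κ U π z →
        ∀ i, V ω (U i) π (z i) < V ω (U i) πh (xh i)) :=
  open_set_of_dominated_general ω hω n κ hκpos hκsum U hU k hk π₀ hπ₀ πh xh hxh hdom

end
end

section
/- In the three-agent economy with claims κ₁ = κ₂ = κ₃ = 1/3 and linear utilities given by ν₁(F) = 3λ(F ∩ [0,1/3]) and ν₂ = ν₃ with ν₂(F) = 3λ(F ∩ [1/3,1/2)) + λ(F ∩ [1/2,1]): (a) for π = {A,B} with A = [0,1/2), B = [1/2,1], the prices p_A = p_B = 1 together with x¹ = (1/3,0), x² = x³ = (1/12,1/4) form a competitive equilibrium of E(π), with utilities V₁(π,x¹) = 2/3 and V₂(π,x²) = V₃(π,x³) = 1/3; (b) for ρ = {A′,B′} with A′ = [0,1/3), B′ = [1/3,1], the prices q_{A′} = q_{B′} = 1 together with y¹ = (1/3,0), y² = y³ = (0,1/3) form a competitive equilibrium of E(ρ), with utilities V₁(ρ,y¹) = 1 and V₂(ρ,y²) = V₃(ρ,y³) = 1/2; consequently, the competitive configuration ⟨ρ,(y^i)⟩ Pareto-dominates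 ⟨π,(x^i)⟩. -/
/-
With linear utilities, a bundle that exhausts the budget is optimal as soon as it is spent only on
commodities of maximal bang per buck `ν(C) / (λ(C) p_C)`: any bundle worth more in utility then
costs more than the budget. Under `π` agent 1 only values `A` (2 utils per unit of money) and
agents 2 and 3 value both goods equally (1 util per unit); under `ρ` agent 1 only values `A′`
(3 per unit) and agents 2 and 3 only `B′` (3/2 per unit). Moving the boundary from `1/2` to `1/3`
separates the goods the two types of agents care about, so every agent gains.
-/

open MeasureTheory Set
open scoped ENNReal Classical

noncomputable section

/-- Lebesgue measure of a set, as a real number. -/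
def lvol (C : Set ℝ) : ℝ := (volume C).toReal

/-- Linear utility over tradable bundles: `V(π,x) = ∑_{C∈π} (x_C/λ(C)) ν(C)`,
where the evaluation of each commodity is given by the set function `νf`. -/
def Vlin (parts : Finset (Set ℝ)) (νf : Set ℝ → ℝ) (x : Set ℝ → ℝ) : ℝ :=
  ∑ C ∈ parts, (x C / lvol C) * νf C

/-- Competitive equilibrium of the economy on the commodities `parts` with claims `κ`
and utilities `Vf` on tradable bundles. -/
def IsEqm {n : ℕ} (parts : Finset (Set ℝ)) (κ : Fin n → ℝ)
    (Vf : Fin n → (Set ℝ → ℝ) → ℝ) (p : Set ℝ → ℝ) (x : Fin n → Set ℝ → ℝ) : Prop :=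
  (∀ C ∈ parts, 0 ≤ p C) ∧
  (∀ i, ∀ C ∈ parts, 0 ≤ x i C) ∧
  (∀ C ∈ parts, ∑ i, x i C ≤ lvol C) ∧
  (∀ i, ∑ C ∈ parts, p C * x i C ≤ κ i * ∑ C ∈ parts, p C * lvol C) ∧
  (∀ i, ∀ y : Set ℝ → ℝ, (∀ C ∈ parts, 0 ≤ y C) → Vf i (x i) < Vf i y →
    κ i * ∑ C ∈ parts, p C * lvol C < ∑ C ∈ parts, p C * y C)

theorem lvol_eq_of_Ioo_subset_of_subset_Icc {s : Set ℝ} {a b : ℝ} (hab : a ≤ b)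
    (hIoo : Ioo a b ⊆ s) (hIcc : s ⊆ Icc a b) : lvol s = b - a := by
  have hle : volume s ≤ ENNReal.ofReal (b - a) := Real.volume_Icc ▸ measure_mono hIcc
  have hge : ENNReal.ofReal (b - a) ≤ volume s := Real.volume_Ioo ▸ measure_mono hIoo
  rw [lvol, le_antisymm hle hge, ENNReal.toReal_ofReal (sub_nonneg.mpr hab)]

theorem lt_cost_of_Vlin_lt {parts : Finset (Set ℝ)} {ν p x y : Set ℝ → ℝ} {r w : ℝ}
    (hr : 0 ≤ r) (hratio : ∀ C ∈ parts, ν C / lvol C ≤ r * p C)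
    (hx : Vlin parts ν x = r * w) (hy : ∀ C ∈ parts, 0 ≤ y C)
    (hlt : Vlin parts ν x < Vlin parts ν y) : w < ∑ C ∈ parts, p C * y C := by
  have hVy : Vlin parts ν y ≤ r * ∑ C ∈ parts, p C * y C := by
    rw [Vlin, Finset.mul_sum]
    refine Finset.sum_le_sum fun C hC => ?_
    calc y C / lvol C * ν C = y C * (ν C / lvol C) := by ring
      _ ≤ y C * (r * p C) := mul_le_mul_of_nonneg_left (hratio C hC) (hy C hC)
      _ = r * (p C * y C) := by ring
  exact lt_of_mul_lt_mul_left (hx ▸ hlt.trans_le hVy) hr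

theorem isEqm_of_bang_per_buck_le {n : ℕ} {parts : Finset (Set ℝ)} {κ : Fin n → ℝ}
    {ν : Fin n → Set ℝ → ℝ} {p : Set ℝ → ℝ} {x : Fin n → Set ℝ → ℝ} (r : Fin n → ℝ)
    (hp : ∀ C ∈ parts, 0 ≤ p C) (hx : ∀ i, ∀ C ∈ parts, 0 ≤ x i C)
    (hfeas : ∀ C ∈ parts, ∑ i, x i C ≤ lvol C)
    (hbudget : ∀ i, ∑ C ∈ parts, p C * x i C ≤ κ i * ∑ C ∈ parts, p C * lvol C)
    (hr : ∀ i, 0 ≤ r i) (hratio : ∀ i, ∀ C ∈ parts, ν i C / lvol C ≤ r i * p C)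
    (hV : ∀ i, Vlin parts (ν i) (x i) = r i * (κ i * ∑ C ∈ parts, p C * lvol C)) :
    IsEqm parts κ (fun i => Vlin parts (ν i)) p x :=
  ⟨hp, hx, hfeas, hbudget, fun i _ hy hlt => lt_cost_of_Vlin_lt (hr i) (hratio i) (hV i) hy hlt⟩

namespace Stmt10

/-- Agent 1's evaluation measure: `ν₁(F) = 3 λ(F ∩ [0,1/3])`. -/
def ν₁ (F : Set ℝ) : ℝ := 3 * lvol (F ∩ Set.Icc 0 (1/3))

/-- Agents 2 and 3's evaluation measure:
`ν₂(F) = 3 λ(F ∩ [1/3,1/2)) + λ(F ∩ [1/2,1])`. -/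
def ν₂ (F : Set ℝ) : ℝ :=
  3 * lvol (F ∩ Set.Ico (1/3) (1/2)) + lvol (F ∩ Set.Icc (1/2) 1)

/-- The evaluation measures of the three agents. -/
def νs : Fin 3 → Set ℝ → ℝ := ![ν₁, ν₂, ν₂]

/-- Equal claims `κᵢ = 1/3`. -/
def κ : Fin 3 → ℝ := fun _ => 1/3

def A : Set ℝ := Set.Ico 0 (1/2)
def B : Set ℝ := Set.Icc (1/2) 1
/-- The classification `π = {A,B}`. -/
def partsπ : Finset (Set ℝ) := {A, B}

def A' : Set ℝ := Set.Ico 0 (1/3)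
def B' : Set ℝ := Set.Icc (1/3) 1
/-- The classification `ρ = {A′,B′}`. -/
def partsρ : Finset (Set ℝ) := {A', B'}

/-- `x¹ = (1/3,0)`, `x² = x³ = (1/12,1/4)`. -/
def xs : Fin 3 → Set ℝ → ℝ :=
  ![fun C => if C = A then 1/3 else 0,
    fun C => if C = A then 1/12 else if C = B then 1/4 else 0,
    fun C => if C = A then 1/12 else if C = B then 1/4 else 0]

/-- `y¹ = (1/3,0)`, `y² = y³ = (0,1/3)`. -/
def ys : Fin 3 → Set ℝ → ℝ :=
  ![fun C => if C = A' then 1/3 else 0,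
    fun C => if C = B' then 1/3 else 0,
    fun C => if C = B' then 1/3 else 0]

theorem A_ne_B : A ≠ B := fun h => by
  have h0 : (0 : ℝ) ∈ B := h ▸ (by norm_num [A] : (0 : ℝ) ∈ A)
  norm_num [B] at h0

theorem A'_ne_B' : A' ≠ B' := fun h => by
  have h0 : (0 : ℝ) ∈ B' := h ▸ (by norm_num [A'] : (0 : ℝ) ∈ A')
  norm_num [B'] at h0

@[simp]
theorem lvol_A : lvol A = 1/2 := by
  rw [lvol_eq_of_Ioo_subset_of_subset_Icc (a := 0) (b := 1/2)] <;>
    first | (intro x hx; grind [A]) | norm_num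

@[simp]
theorem lvol_B : lvol B = 1/2 := by
  rw [lvol_eq_of_Ioo_subset_of_subset_Icc (a := 1/2) (b := 1)] <;>
    first | (intro x hx; grind [B]) | norm_num

@[simp]
theorem lvol_A' : lvol A' = 1/3 := by
  rw [lvol_eq_of_Ioo_subset_of_subset_Icc (a := 0) (b := 1/3)] <;>
    first | (intro x hx; grind [A']) | norm_num

@[simp]
theorem lvol_B' : lvol B' = 2/3 := by
  rw [lvol_eq_of_Ioo_subset_of_subset_Icc (a := 1/3) (b := 1)] <;>
    first | (intro x hx; grind [B']) | norm_num

@[simp]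
theorem ν₁_A : ν₁ A = 1 := by
  rw [ν₁, lvol_eq_of_Ioo_subset_of_subset_Icc (a := 0) (b := 1/3)] <;>
    first | (intro x hx; grind [A]) | norm_num

@[simp]
theorem ν₁_B : ν₁ B = 0 := by
  rw [ν₁, lvol_eq_of_Ioo_subset_of_subset_Icc (a := 1/3) (b := 1/3)] <;>
    first | (intro x hx; grind [B]) | norm_num

@[simp]
theorem ν₁_A' : ν₁ A' = 1 := by
  rw [ν₁, lvol_eq_of_Ioo_subset_of_subset_Icc (a := 0) (b := 1/3)] <;>
    first | (intro x hx; grind [A']) | norm_num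

@[simp]
theorem ν₁_B' : ν₁ B' = 0 := by
  rw [ν₁, lvol_eq_of_Ioo_subset_of_subset_Icc (a := 1/3) (b := 1/3)] <;>
    first | (intro x hx; grind [B']) | norm_num

@[simp]
theorem ν₂_A : ν₂ A = 1/2 := by
  rw [ν₂, lvol_eq_of_Ioo_subset_of_subset_Icc (a := 1/3) (b := 1/2),
    lvol_eq_of_Ioo_subset_of_subset_Icc (a := 1/2) (b := 1/2)] <;>
    first | (intro x hx; grind [A]) | norm_num

@[simp]
theorem ν₂_B : ν₂ B = 1/2 := by
  rw [ν₂, lvol_eq_of_Ioo_subset_of_subset_Icc (a := 1/2) (b := 1/2),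
    lvol_eq_of_Ioo_subset_of_subset_Icc (a := 1/2) (b := 1)] <;>
    first | (intro x hx; grind [B]) | norm_num

@[simp]
theorem ν₂_A' : ν₂ A' = 0 := by
  rw [ν₂, lvol_eq_of_Ioo_subset_of_subset_Icc (a := 1/3) (b := 1/3),
    lvol_eq_of_Ioo_subset_of_subset_Icc (a := 1/2) (b := 1/2)] <;>
    first | (intro x hx; grind [A']) | norm_num

@[simp]
theorem ν₂_B' : ν₂ B' = 1 := by
  rw [ν₂, lvol_eq_of_Ioo_subset_of_subset_Icc (a := 1/3) (b := 1/2),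
    lvol_eq_of_Ioo_subset_of_subset_Icc (a := 1/2) (b := 1)] <;>
    first | (intro x hx; grind [B']) | norm_num

theorem Vlin_partsπ_xs (i : Fin 3) : Vlin partsπ (νs i) (xs i) = ![2/3, 1/3, 1/3] i := by
  fin_cases i <;>
    simp [Vlin, partsπ, Finset.sum_pair A_ne_B, xs, νs, A_ne_B.symm] <;> norm_num

theorem Vlin_partsρ_ys (i : Fin 3) : Vlin partsρ (νs i) (ys i) = ![1, 1/2, 1/2] i := by
  fin_cases i <;>
    simp [Vlin, partsρ, Finset.sum_pair A'_ne_B', ys, νs, A'_ne_B'] <;> norm_num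

theorem isEqm_partsπ_xs : IsEqm partsπ κ (fun i => Vlin partsπ (νs i)) (fun _ => 1) xs := by
  refine isEqm_of_bang_per_buck_le ![2, 1, 1] (by simp) ?_ ?_ ?_ ?_ ?_ fun i => by
    rw [Vlin_partsπ_xs]
    fin_cases i <;> simp [partsπ, Finset.sum_pair A_ne_B, κ] <;> norm_num
  all_goals
    simp [Fin.forall_fin_succ, Fin.sum_univ_three, partsπ, Finset.sum_pair A_ne_B, xs, νs, κ,
      A_ne_B.symm] <;> norm_num

theorem isEqm_partsρ_ys : IsEqm partsρ κ (fun i => Vlin partsρ (νs i)) (fun _ => 1) ys := by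
  refine isEqm_of_bang_per_buck_le ![3, 3/2, 3/2] (by simp) ?_ ?_ ?_ ?_ ?_ fun i => by
    rw [Vlin_partsρ_ys]
    fin_cases i <;> simp [partsρ, Finset.sum_pair A'_ne_B', κ] <;> norm_num
  all_goals
    simp [Fin.forall_fin_succ, Fin.sum_univ_three, partsρ, Finset.sum_pair A'_ne_B', ys, νs, κ,
      A'_ne_B', A'_ne_B'.symm] <;> norm_num

/-- (a) unit prices and `(x^i)` form a competitive equilibrium of `E(π)`
with utilities `(2/3, 1/3, 1/3)`; (b) unit prices and `(y^i)` form a competitive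
equilibrium of `E(ρ)` with utilities `(1, 1/2, 1/2)`; consequently `⟨ρ,(y^i)⟩`
Pareto-dominates `⟨π,(x^i)⟩`. -/
theorem conflation_pareto_dominated :
    IsEqm partsπ κ (fun i => Vlin partsπ (νs i)) (fun _ => 1) xs ∧
    Vlin partsπ ν₁ (xs 0) = 2/3 ∧
    Vlin partsπ ν₂ (xs 1) = 1/3 ∧ Vlin partsπ ν₂ (xs 2) = 1/3 ∧
    IsEqm partsρ κ (fun i => Vlin partsρ (νs i)) (fun _ => 1) ys ∧
    Vlin partsρ ν₁ (ys 0) = 1 ∧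
    Vlin partsρ ν₂ (ys 1) = 1/2 ∧ Vlin partsρ ν₂ (ys 2) = 1/2 ∧
    ((∀ i, Vlin partsπ (νs i) (xs i) ≤ Vlin partsρ (νs i) (ys i)) ∧
      ∃ i, Vlin partsπ (νs i) (xs i) < Vlin partsρ (νs i) (ys i)) := by
  refine ⟨isEqm_partsπ_xs, Vlin_partsπ_xs 0, Vlin_partsπ_xs 1, Vlin_partsπ_xs 2, isEqm_partsρ_ys,
    Vlin_partsρ_ys 0, Vlin_partsρ_ys 1, Vlin_partsρ_ys 2, fun i => ?_, 0, ?_⟩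
  all_goals rw [Vlin_partsπ_xs, Vlin_partsρ_ys]
  · fin_cases i <;> norm_num
  · norm_num

end Stmt10

end
end
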